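/- Let g ∈ Hom_{B^e}(Q_2, B) be the cocycle with g(e'_2) = y and g(e'_i) = 0 for i ≠ 2, and let ψ_g be the family of (B⊗B)-linear maps Q_i → Q_{i−1} with ψ_g(e'_{2j}) = e'_{2j−1} and ψ_g(e'_{2j−1}) = 0. Then for every i, (d∘ψ_g + ψ_g∘d)(e'_i) = ((g⊗1 − 1⊗g)∘Δ_Q)(e'_i) = y·e'_{i−2} − e'_{i−2}·y, i.e. both sides equal the element y⊗1 − 1⊗y of Q_{i−2} = B⊗B for i ≥ 2 and are zero for i < 2. Hence ψ_g satisfies the homotopy lifting equation d∘ψ_g + ψ_g∘d = (g⊗1 − 1⊗g)Δ_Q for the degree 2 cocycle g. -/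

import Mathlib

open scoped TensorProduct DirectSum
open MulOpposite

set_option synthInstance.maxHeartbeats 1000000
set_option maxHeartbeats 1000000

noncomputable section

universe u

namespace HLPaper

variable {k : Type u} [Field k]

def pcast {P : ℤ → Type u} [∀ i, AddCommGroup (P i)] [∀ i, Module k (P i)]
    {i j : ℤ} (h : i = j) : P i →ₗ[k] P j := by subst h; exact LinearMap.id

structure Bimod (A : Type u) [Ring A] [Algebra k A]
    (P : ℤ → Type u) [∀ i, AddCommGroup (P i)] [∀ i, Module k (P i)] : Type u where
  actL : ∀ i, A →ₐ[k] Module.End k (P i)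
  actR : ∀ i, Aᵐᵒᵖ →ₐ[k] Module.End k (P i)

variable {A : Type u} [Ring A] [Algebra k A]
variable {P : ℤ → Type u} [∀ i, AddCommGroup (P i)] [∀ i, Module k (P i)]

def Bimod.IsCommuting (act : Bimod (k := k) A P) : Prop :=
  ∀ (i : ℤ) (a : A) (b : Aᵐᵒᵖ), act.actL i a * act.actR i b = act.actR i b * act.actL i a

def IsBimap (act : Bimod (k := k) A P) {i j : ℤ} (φ : P i →ₗ[k] P j) : Prop :=
  (∀ a : A, φ ∘ₗ act.actL i a = act.actL j a ∘ₗ φ) ∧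
  (∀ b : Aᵐᵒᵖ, φ ∘ₗ act.actR i b = act.actR j b ∘ₗ φ)

def IsBimapToAlg (act : Bimod (k := k) A P) {m : ℤ} (f : P m →ₗ[k] A) : Prop :=
  (∀ (a : A) (x : P m), f (act.actL m a x) = a * f x) ∧
  (∀ (a : A) (x : P m), f (act.actR m (op a) x) = f x * a)

def envModule (act : Bimod (k := k) A P) (h : act.IsCommuting) (i : ℤ) :
    Module (A ⊗[k] Aᵐᵒᵖ) (P i) :=
  Module.compHom _ (Algebra.TensorProduct.lift (act.actL i) (act.actR i)
    (fun a b => h i a b)).toRingHom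

/-! ### Quotient helpers (total versions of `liftQ`/`mapQ`) -/

/-- `Submodule.liftQ`, extended by zero if the compatibility condition fails.
(In all uses below the condition does hold.) -/
def liftQOr0 {X Z : Type u} [AddCommGroup X] [Module k X] [AddCommGroup Z] [Module k Z]
    (S : Submodule k X) (f : X →ₗ[k] Z) : (X ⧸ S) →ₗ[k] Z :=
  letI := Classical.dec (S ≤ LinearMap.ker f)
  if h : S ≤ LinearMap.ker f then S.liftQ f h else 0

/-- `Submodule.mapQ`, extended by zero if the compatibility condition fails. -/
def mapQOr0 {X Y : Type u} [AddCommGroup X] [Module k X] [AddCommGroup Y] [Module k Y]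
    (S : Submodule k X) (T : Submodule k Y) (f : X →ₗ[k] Y) : (X ⧸ S) →ₗ[k] (Y ⧸ T) :=
  letI := Classical.dec (S ≤ T.comap f)
  if h : S ≤ T.comap f then Submodule.mapQ S T f h else 0

/-! ### The balanced tensor product `P ⊗_A P` -/

/-- The balancing subspace defining `P j ⊗_A P l` as a quotient of `P j ⊗ₖ P l`. -/
def bal (act : Bimod (k := k) A P) (j l : ℤ) : Submodule k (P j ⊗[k] P l) :=
  Submodule.span k
    {z | ∃ (a : A) (x : P j) (y : P l),
      z = (act.actR j (op a) x) ⊗ₜ[k] y - x ⊗ₜ[k] (act.actL l a y)}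

/-- The component `P j ⊗_A P l` of the tensor product of complexes `P ⊗_A P`. -/
abbrev TensA (act : Bimod (k := k) A P) (j l : ℤ) : Type u :=
  (P j ⊗[k] P l) ⧸ bal act j l

instance (act : Bimod (k := k) A P) (j l : ℤ) : AddCommGroup (TensA act j l) :=
  inferInstanceAs (AddCommGroup ((P j ⊗[k] P l) ⧸ bal act j l))

instance (act : Bimod (k := k) A P) (j l : ℤ) : Module k (TensA act j l) :=
  inferInstanceAs (Module k ((P j ⊗[k] P l) ⧸ bal act j l))

/-- The image of an elementary tensor `x ⊗ y` in `P j ⊗_A P l`. -/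
def tmulA (act : Bimod (k := k) A P) {j l : ℤ} (x : P j) (y : P l) : TensA act j l :=
  Submodule.Quotient.mk (x ⊗ₜ[k] y)

/-- Cast for `TensA` along equalities of indices. -/
def tcast (act : Bimod (k := k) A P) {j j' l l' : ℤ} (h1 : j = j') (h2 : l = l') :
    TensA act j l →ₗ[k] TensA act j' l' := by subst h1; subst h2; exact LinearMap.id

/-- The map `P j ⊗_A P l → P j' ⊗_A P l'` induced by a pair of bimodule maps. -/
def mapTensA (act : Bimod (k := k) A P) {j l j' l' : ℤ}
    (φ : P j →ₗ[k] P j') (ψ : P l →ₗ[k] P l') : TensA act j l →ₗ[k] TensA act j' l' :=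
  mapQOr0 _ _ (TensorProduct.map φ ψ)

/-- Left action of `A` on `P j ⊗_A P l` (through the left factor). -/
def actLTensA (act : Bimod (k := k) A P) (j l : ℤ) (a : A) :
    TensA act j l →ₗ[k] TensA act j l :=
  mapTensA act (act.actL j a) LinearMap.id

/-- Right action of `A` on `P j ⊗_A P l` (through the right factor). -/
def actRTensA (act : Bimod (k := k) A P) (j l : ℤ) (b : Aᵐᵒᵖ) :
    TensA act j l →ₗ[k] TensA act j l :=
  mapTensA act LinearMap.id (act.actR l b)

/-! ### The total complex of `P ⊗_A P` in a given degree -/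

/-- Index set of the degree-`i` component of a total complex. -/
abbrev DiagIdx (i : ℤ) : Type := {p : ℤ × ℤ // p.1 + p.2 = i}

/-- The degree-`i` component `(P ⊗_A P)_i = ⨁_{j+l=i} P j ⊗_A P l`. -/
abbrev DTarget (act : Bimod (k := k) A P) (i : ℤ) : Type u :=
  ⨁ (p : DiagIdx i), TensA act p.1.1 p.1.2

instance (act : Bimod (k := k) A P) (i : ℤ) : AddCommGroup (DTarget act i) :=
  inferInstanceAs (AddCommGroup (⨁ (p : DiagIdx i), TensA act p.1.1 p.1.2))

instance (act : Bimod (k := k) A P) (i : ℤ) : Module k (DTarget act i) :=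
  inferInstanceAs (Module k (⨁ (p : DiagIdx i), TensA act p.1.1 p.1.2))

/-- Inclusion of the `(j,l)` component into `(P ⊗_A P)_{j+l}`. -/
def inclDT (act : Bimod (k := k) A P) {i : ℤ} (p : DiagIdx i) :
    TensA act p.1.1 p.1.2 →ₗ[k] DTarget act i :=
  DirectSum.lof k (DiagIdx i) (fun q : DiagIdx i => TensA act q.1.1 q.1.2) p

/-- The Koszul-signed differential on the total complex `P ⊗_A P`:
`d(p ⊗ q) = d(p) ⊗ q + (−1)^{|p|} p ⊗ d(q)`. -/
def dDT (act : Bimod (k := k) A P) (d : ∀ i, P i →ₗ[k] P (i - 1)) (i : ℤ) :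
    DTarget act i →ₗ[k] DTarget act (i - 1) :=
  DirectSum.toModule k (DiagIdx i) (DTarget act (i - 1)) fun p =>
    (inclDT act (⟨(p.1.1 - 1, p.1.2), by have := p.2; omega⟩ : DiagIdx (i - 1))) ∘ₗ
        mapTensA act (d p.1.1) LinearMap.id
      + (p.1.1.negOnePow : ℤ) •
        ((inclDT act (⟨(p.1.1, p.1.2 - 1), by have := p.2; omega⟩ : DiagIdx (i - 1))) ∘ₗ
          mapTensA act LinearMap.id (d p.1.2))

/-! ### Collapse maps `(f ⊗ 1)` and `(1 ⊗ f)` on `P ⊗_A P`, using `A ⊗_A P ≅ P ≅ P ⊗_A A` -/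

/-- `(f ⊗ 1) : P m ⊗_A P l → P l`, `x ⊗ y ↦ f(x) · y`, for `f : P m → A`. -/
def collapseL (act : Bimod (k := k) A P) {m : ℤ} (f : P m →ₗ[k] A) (l : ℤ) :
    TensA act m l →ₗ[k] P l :=
  liftQOr0 _ (TensorProduct.lift ((act.actL l).toLinearMap ∘ₗ f))

/-- `(1 ⊗ f) : P j ⊗_A P m → P j`, `x ⊗ y ↦ x · f(y)`, for `f : P m → A`
(the Koszul sign is inserted at use sites). -/
def collapseR (act : Bimod (k := k) A P) {m : ℤ} (f : P m →ₗ[k] A) (j : ℤ) :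
    TensA act j m →ₗ[k] P j :=
  liftQOr0 _ (TensorProduct.lift
    (LinearMap.flip ((act.actR j).toLinearMap ∘ₗ
      (opLinearEquiv k : A ≃ₗ[k] Aᵐᵒᵖ).toLinearMap ∘ₗ f)))

/-- The total collapse map `(f ⊗ 1) : (P ⊗_A P)_i → P_{i-m}` for a cochain
`f : P m → A`; it is `f(x) · y` on the component `(m, i-m)` and `0` on all others. -/
def fTensorOne (act : Bimod (k := k) A P) {m : ℤ} (f : P m →ₗ[k] A) (i : ℤ) :
    DTarget act i →ₗ[k] P (i - m) :=
  DirectSum.toModule k (DiagIdx i) (P (i - m)) fun p =>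
    if h : p.1.1 = m then
      pcast (show p.1.2 = i - m by have := p.2; omega) ∘ₗ
        collapseL act f p.1.2 ∘ₗ tcast act h rfl
    else 0

/-- The total collapse map `(1 ⊗ f) : (P ⊗_A P)_i → P_{i-m}` for a cochain
`f : P m → A`, with the Koszul sign `(−1)^{m·j}` on the component `(j, m)`. -/
def oneTensorF (act : Bimod (k := k) A P) {m : ℤ} (f : P m →ₗ[k] A) (i : ℤ) :
    DTarget act i →ₗ[k] P (i - m) :=
  DirectSum.toModule k (DiagIdx i) (P (i - m)) fun p =>
    if h : p.1.2 = m then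
      ((m * p.1.1).negOnePow : ℤ) •
        (pcast (show p.1.1 = i - m by have := p.2; omega) ∘ₗ
          collapseR act f p.1.1 ∘ₗ tcast act rfl h)
    else 0

/-- The augmentation `(P ⊗_A P)_0 → A ⊗_A A ≅ A`, `x ⊗ y ↦ μ(x)·μ(y)`,
induced by the augmentation `μ : P 0 → A`. -/
def muCollapse (act : Bimod (k := k) A P) (μ : P 0 →ₗ[k] A) :
    DTarget act 0 →ₗ[k] A :=
  DirectSum.toModule k (DiagIdx 0) A fun p =>
    if h : p.1.1 = 0 then
      liftQOr0 _ (TensorProduct.lift ((((LinearMap.mul k A) ∘ₗ μ).compl₂ μ))) ∘ₗ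
        tcast act h (show p.1.2 = 0 by have := p.2; omega)
    else 0

/-- Left action of `A` on `(P ⊗_A P)_i` (componentwise, through the leftmost factor). -/
def actLDT (act : Bimod (k := k) A P) (i : ℤ) (a : A) :
    DTarget act i →ₗ[k] DTarget act i :=
  DFinsupp.mapRange.linearMap (fun p : DiagIdx i => actLTensA act p.1.1 p.1.2 a)

/-- Right action of `A` on `(P ⊗_A P)_i` (componentwise, through the rightmost factor). -/
def actRDT (act : Bimod (k := k) A P) (i : ℤ) (b : Aᵐᵒᵖ) :
    DTarget act i →ₗ[k] DTarget act i :=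
  DFinsupp.mapRange.linearMap (fun p : DiagIdx i => actRTensA act p.1.1 p.1.2 b)

/-! ### Resolutions and diagonal maps -/

/-- The data `(P, d, μ)` is a nonnegatively graded projective resolution of `A`
by `A`-bimodules (`A^e`-modules). -/
structure IsResolution (act : Bimod (k := k) A P)
    (d : ∀ i, P i →ₗ[k] P (i - 1)) (μ : P 0 →ₗ[k] A) : Prop where
  /-- the actions commute, i.e. each `P i` is an `A`-bimodule -/
  actComm : act.IsCommuting
  /-- the differential is a map of bimodules -/
  dBimap : ∀ i, IsBimap act (d i)
  /-- the augmentation is a map of bimodules -/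
  μBimap : IsBimapToAlg act μ
  /-- `P` is a complex -/
  dd : ∀ i, d (i - 1) ∘ₗ d i = 0
  /-- `P` vanishes in negative degrees -/
  zero_neg : ∀ i, i < 0 → Subsingleton (P i)
  /-- the augmented complex is exact in positive degrees -/
  exact_pos : ∀ i, 1 ≤ i →
    LinearMap.range (pcast (show i + 1 - 1 = i by omega) ∘ₗ d (i + 1)) = LinearMap.ker (d i)
  /-- `μ ∘ d₁ = 0` and exactness at degree `0` -/
  exact_zero : LinearMap.range (d 1) = LinearMap.ker μ
  /-- `μ` is surjective -/
  surj : Function.Surjective μ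
  /-- each `P i` is projective as an `A^e`-module -/
  proj : ∀ i, letI := envModule act actComm i; Module.Projective (A ⊗[k] Aᵐᵒᵖ) (P i)

/-- `Δ : P → P ⊗_A P` is a chain map of complexes of bimodules lifting the
identity map of `A` (i.e. compatible with the augmentations). -/
structure IsDiagonal (act : Bimod (k := k) A P) (d : ∀ i, P i →ₗ[k] P (i - 1))
    (μ : P 0 →ₗ[k] A) (Δ : ∀ i, P i →ₗ[k] DTarget act i) : Prop where
  /-- `Δ` is a map of bimodules in each degree -/
  bimapL : ∀ (i : ℤ) (a : A), Δ i ∘ₗ act.actL i a = actLDT act i a ∘ₗ Δ i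
  bimapR : ∀ (i : ℤ) (b : Aᵐᵒᵖ), Δ i ∘ₗ act.actR i b = actRDT act i b ∘ₗ Δ i
  /-- `Δ` is a chain map -/
  chain : ∀ i, dDT act d i ∘ₗ Δ i = Δ (i - 1) ∘ₗ d i
  /-- `Δ` lifts the identity map of `A`, i.e. it is compatible with the augmentations
  under the identification `A ⊗_A A ≅ A` -/
  counit : ∀ z : P 0, muCollapse act μ (Δ 0 z) = μ z

/-- `f : P m → A` is a cocycle: `f ∘ d = 0`. -/
def IsCocycle {m : ℤ} (d : ∀ i, P i →ₗ[k] P (i - 1)) (f : P m →ₗ[k] A) : Prop :=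
  f ∘ₗ pcast (show m + 1 - 1 = m by omega) ∘ₗ d (m + 1) = 0

/-- Volkov's homotopy-lifting condition for a cocycle `f : P m → A` with respect to a
diagonal map `Δ`:  `ψ` is a family of bimodule maps `P i → P_{i-m+1}` with
`d ∘ ψ − (−1)^{m−1} ψ ∘ d = (f ⊗ 1 − 1 ⊗ f) ∘ Δ`, and `μ ∘ ψ − (−1)^{m−1} f ∘ ψ_P`
is a coboundary for some bimodule homotopy `ψ_P` with
`d ∘ ψ_P + ψ_P ∘ d = (μ ⊗ 1 − 1 ⊗ μ) ∘ Δ`. -/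
def IsHomotopyLifting (act : Bimod (k := k) A P) (d : ∀ i, P i →ₗ[k] P (i - 1))
    (μ : P 0 →ₗ[k] A) (Δ : ∀ i, P i →ₗ[k] DTarget act i)
    {m : ℤ} (f : P m →ₗ[k] A) (ψ : ∀ i, P i →ₗ[k] P (i - m + 1)) : Prop :=
  (∀ i, IsBimap act (ψ i)) ∧
  (∀ i, pcast (show i - m + 1 - 1 = i - m by omega) ∘ₗ d (i - m + 1) ∘ₗ ψ i
      - ((m - 1).negOnePow : ℤ) •
          (pcast (show i - 1 - m + 1 = i - m by omega) ∘ₗ ψ (i - 1) ∘ₗ d i)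
    = fTensorOne act f i ∘ₗ Δ i - oneTensorF act f i ∘ₗ Δ i) ∧
  (∃ ψP : ∀ i, P i →ₗ[k] P (i + 1),
    (∀ i, IsBimap act (ψP i)) ∧
    (∀ i, pcast (show i + 1 - 1 = i by omega) ∘ₗ d (i + 1) ∘ₗ ψP i
        + pcast (show i - 1 + 1 = i by omega) ∘ₗ ψP (i - 1) ∘ₗ d i
      = pcast (show i - 0 = i by omega) ∘ₗ (fTensorOne act μ i ∘ₗ Δ i - oneTensorF act μ i ∘ₗ Δ i)) ∧
    (∃ γ : P (m - 2) →ₗ[k] A, IsBimapToAlg act γ ∧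
      μ ∘ₗ pcast (show m - 1 - m + 1 = 0 by omega) ∘ₗ ψ (m - 1)
        - ((m - 1).negOnePow : ℤ) • (f ∘ₗ pcast (show m - 1 + 1 = m by omega) ∘ₗ ψP (m - 1))
      = γ ∘ₗ pcast (show m - 1 - 1 = m - 2 by omega) ∘ₗ d (m - 1)))

/-! ### The total tensor product complex `P ⊗ₖ Q` over the algebra `A ⊗ₖ B` -/

section Product

variable {B : Type u} [Ring B] [Algebra k B]
variable {Q : ℤ → Type u} [∀ i, AddCommGroup (Q i)] [∀ i, Module k (Q i)]

/-- The degree-`r` component `(P ⊗ Q)_r = ⨁_{i+j=r} P i ⊗ₖ Q j` of the total complex. -/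
abbrev PQmod (k : Type u) [Field k] (P Q : ℤ → Type u)
    [∀ i, AddCommGroup (P i)] [∀ i, Module k (P i)]
    [∀ i, AddCommGroup (Q i)] [∀ i, Module k (Q i)] (r : ℤ) : Type u :=
  ⨁ (p : DiagIdx r), P p.1.1 ⊗[k] Q p.1.2

instance (k : Type u) [Field k] (P Q : ℤ → Type u)
    [∀ i, AddCommGroup (P i)] [∀ i, Module k (P i)]
    [∀ i, AddCommGroup (Q i)] [∀ i, Module k (Q i)] (r : ℤ) :
    AddCommGroup (PQmod k P Q r) :=
  inferInstanceAs (AddCommGroup (⨁ (p : DiagIdx r), P p.1.1 ⊗[k] Q p.1.2))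

instance (k : Type u) [Field k] (P Q : ℤ → Type u)
    [∀ i, AddCommGroup (P i)] [∀ i, Module k (P i)]
    [∀ i, AddCommGroup (Q i)] [∀ i, Module k (Q i)] (r : ℤ) :
    Module k (PQmod k P Q r) :=
  inferInstanceAs (Module k (⨁ (p : DiagIdx r), P p.1.1 ⊗[k] Q p.1.2))

/-- Inclusion of the `(i,j)` component into `(P ⊗ Q)_r`. -/
def inclPQ {r : ℤ} (p : DiagIdx r) : (P p.1.1 ⊗[k] Q p.1.2) →ₗ[k] PQmod k P Q r :=
  DirectSum.lof k (DiagIdx r) (fun q : DiagIdx r => P q.1.1 ⊗[k] Q q.1.2) p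

/-- A family of algebra actions on the members of a family of modules gives an
algebra action on their direct sum, componentwise. -/
def compwiseEnd {ι : Type} [DecidableEq ι] (M : ι → Type u)
    [∀ p, AddCommGroup (M p)] [∀ p, Module k (M p)]
    (C : Type u) [Ring C] [Algebra k C] (φ : ∀ p, C →ₐ[k] Module.End k (M p)) :
    C →ₐ[k] Module.End k (⨁ p, M p) where
  toFun c := DirectSum.toModule k ι (⨁ p, M p) (fun p => DirectSum.lof k ι M p ∘ₗ φ p c)
  map_one' := by
    refine DirectSum.linearMap_ext k fun p => ?_
    ext x
    simp [DirectSum.toModule_lof]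
  map_mul' c c' := by
    refine DirectSum.linearMap_ext k fun p => ?_
    ext x
    simp [DirectSum.toModule_lof, Module.End.mul_apply]
  map_zero' := by
    refine DirectSum.linearMap_ext k fun p => ?_
    ext x
    simp [DirectSum.toModule_lof]
  map_add' c c' := by
    refine DirectSum.linearMap_ext k fun p => ?_
    ext x
    simp [DirectSum.toModule_lof, map_add]
  commutes' r := by
    refine DirectSum.linearMap_ext k fun p => ?_
    ext x
    simp [DirectSum.toModule_lof, AlgHom.commutes, Module.algebraMap_end_apply]

/-- The left action of `A` on the component `P i ⊗ₖ Q j` (through the `P` factor). -/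
def endTensL (actP : Bimod (k := k) A P) (i j : ℤ) :
    A →ₐ[k] Module.End k (P i ⊗[k] Q j) :=
  (Module.endTensorEndAlgHom (R := k) (S := k) (A := k) (M := P i) (N := Q j)).comp
    (Algebra.TensorProduct.includeLeft.comp (actP.actL i))

/-- The right action of `A` on the component `P i ⊗ₖ Q j` (through the `P` factor). -/
def endTensLop (actP : Bimod (k := k) A P) (i j : ℤ) :
    Aᵐᵒᵖ →ₐ[k] Module.End k (P i ⊗[k] Q j) :=
  (Module.endTensorEndAlgHom (R := k) (S := k) (A := k) (M := P i) (N := Q j)).comp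
    (Algebra.TensorProduct.includeLeft.comp (actP.actR i))

/-- The left action of `B` on the component `P i ⊗ₖ Q j` (through the `Q` factor). -/
def endTensR (actQ : Bimod (k := k) B Q) (i j : ℤ) :
    B →ₐ[k] Module.End k (P i ⊗[k] Q j) :=
  (Module.endTensorEndAlgHom (R := k) (S := k) (A := k) (M := P i) (N := Q j)).comp
    (Algebra.TensorProduct.includeRight.comp (actQ.actL j))

/-- The right action of `B` on the component `P i ⊗ₖ Q j` (through the `Q` factor). -/
def endTensRop (actQ : Bimod (k := k) B Q) (i j : ℤ) :
    Bᵐᵒᵖ →ₐ[k] Module.End k (P i ⊗[k] Q j) :=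
  (Module.endTensorEndAlgHom (R := k) (S := k) (A := k) (M := P i) (N := Q j)).comp
    (Algebra.TensorProduct.includeRight.comp (actQ.actR j))

/-- The left action of `A ⊗ₖ B` on `(P ⊗ Q)_r`:
`(a⊗b)·(p⊗q) = (a·p)⊗(b·q)` componentwise. -/
def prodActL (actP : Bimod (k := k) A P) (actQ : Bimod (k := k) B Q) (r : ℤ) :
    (A ⊗[k] B) →ₐ[k] Module.End k (PQmod k P Q r) :=
  Algebra.TensorProduct.lift
    (compwiseEnd _ _ (fun p : DiagIdx r => endTensL actP p.1.1 p.1.2))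
    (compwiseEnd _ _ (fun p : DiagIdx r => endTensR actQ p.1.1 p.1.2))
    (fun a b => by
      show _ * _ = _ * _
      refine DirectSum.linearMap_ext k fun p => ?_
      refine TensorProduct.ext' fun x y => ?_
      simp [compwiseEnd, DirectSum.toModule_lof, Module.End.mul_apply,
        endTensL, endTensR, Module.endTensorEndAlgHom_apply])

/-- The right action of `A ⊗ₖ B` on `(P ⊗ Q)_r`:
`(p⊗q)·(a'⊗b') = (p·a')⊗(q·b')` componentwise. -/
def prodActR (actP : Bimod (k := k) A P) (actQ : Bimod (k := k) B Q) (r : ℤ) :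
    (A ⊗[k] B)ᵐᵒᵖ →ₐ[k] Module.End k (PQmod k P Q r) :=
  (Algebra.TensorProduct.lift
    (compwiseEnd _ _ (fun p : DiagIdx r => endTensLop actP p.1.1 p.1.2))
    (compwiseEnd _ _ (fun p : DiagIdx r => endTensRop actQ p.1.1 p.1.2))
    (fun a b => by
      show _ * _ = _ * _
      refine DirectSum.linearMap_ext k fun p => ?_
      refine TensorProduct.ext' fun x y => ?_
      simp [compwiseEnd, DirectSum.toModule_lof, Module.End.mul_apply,
        endTensLop, endTensRop, Module.endTensorEndAlgHom_apply])).comp (Algebra.TensorProduct.opAlgEquiv k k A B).symm.toAlgHom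

/-- The `(A ⊗ₖ B)`-bimodule structure
`(a⊗b)(p⊗q)(a'⊗b') = (a·p·a') ⊗ (b·q·b')` on the components of `P ⊗ Q`. -/
def prodBimod (actP : Bimod (k := k) A P) (actQ : Bimod (k := k) B Q) :
    Bimod (k := k) (A ⊗[k] B) (PQmod k P Q) where
  actL := prodActL actP actQ
  actR := prodActR actP actQ

/-- The Koszul-signed total differential `d(p⊗q) = d(p)⊗q + (−1)^{|p|} p⊗d(q)`
on `P ⊗ Q`. -/
def prodD (dP : ∀ i, P i →ₗ[k] P (i - 1)) (dQ : ∀ i, Q i →ₗ[k] Q (i - 1)) (r : ℤ) :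
    PQmod k P Q r →ₗ[k] PQmod k P Q (r - 1) :=
  DirectSum.toModule k (DiagIdx r) (PQmod k P Q (r - 1)) fun p =>
    inclPQ (⟨(p.1.1 - 1, p.1.2), by have := p.2; omega⟩ : DiagIdx (r - 1)) ∘ₗ
        LinearMap.rTensor (Q p.1.2) (dP p.1.1)
      + (p.1.1.negOnePow : ℤ) •
        (inclPQ (⟨(p.1.1, p.1.2 - 1), by have := p.2; omega⟩ : DiagIdx (r - 1)) ∘ₗ
          LinearMap.lTensor (P p.1.1) (dQ p.1.2))

/-- The augmentation `μ_{P⊗Q} = μ_P ⊗ μ_Q : (P ⊗ Q)_0 → A ⊗ₖ B`. -/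
def prodMu (μP : P 0 →ₗ[k] A) (μQ : Q 0 →ₗ[k] B) :
    PQmod k P Q 0 →ₗ[k] A ⊗[k] B :=
  DirectSum.toModule k (DiagIdx 0) (A ⊗[k] B) fun p =>
    if h : p.1.1 = 0 then
      TensorProduct.map μP μQ ∘ₗ
        TensorProduct.map (pcast h) (pcast (show p.1.2 = 0 by have := p.2; omega))
    else 0

/-- The cochain `f ⊗ g : (P⊗Q)_{m+n} → A ⊗ₖ B`, vanishing on the components
`P_i ⊗ Q_j` with `(i,j) ≠ (m,n)` and sending `x ⊗ y ↦ (−1)^{mn} f(x) ⊗ g(y)`. -/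
def cupTensor {m n : ℤ} (f : P m →ₗ[k] A) (g : Q n →ₗ[k] B) :
    PQmod k P Q (m + n) →ₗ[k] A ⊗[k] B :=
  DirectSum.toModule k (DiagIdx (m + n)) (A ⊗[k] B) fun p =>
    if h : p.1.1 = m ∧ p.1.2 = n then
      ((m * n).negOnePow : ℤ) •
        (TensorProduct.map f g ∘ₗ TensorProduct.map (pcast h.1) (pcast h.2))
    else 0

end Product

section Product2

variable {B : Type u} [Ring B] [Algebra k B]
variable {Q : ℤ → Type u} [∀ i, AddCommGroup (Q i)] [∀ i, Module k (Q i)]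

/-- The component of the map
`σ⁻¹ : (P ⊗_A P) ⊗ₖ (Q ⊗_B Q) → (P ⊗ᵗ Q) ⊗_{A⊗B} (P ⊗ᵗ Q)`,
`(x⊗x') ⊗ (y⊗y') ↦ (−1)^{u·l} (x⊗y) ⊗ (x'⊗y')` for `x ∈ P j`, `x' ∈ P u`,
`y ∈ Q l`, `y' ∈ Q v`. -/
def sigmaInv (actP : Bimod (k := k) A P) (actQ : Bimod (k := k) B Q)
    (j u l v : ℤ) :
    (TensA actP j u ⊗[k] TensA actQ l v) →ₗ[k]
      TensA (prodBimod actP actQ) (j + l) (u + v) :=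
  letI base : ((P j ⊗[k] P u) ⊗[k] (Q l ⊗[k] Q v)) →ₗ[k]
      TensA (prodBimod actP actQ) (j + l) (u + v) :=
    ((u * l).negOnePow : ℤ) •
      ((bal (prodBimod actP actQ) (j + l) (u + v)).mkQ ∘ₗ
        TensorProduct.map
          (inclPQ (⟨(j, l), rfl⟩ : DiagIdx (j + l)))
          (inclPQ (⟨(u, v), rfl⟩ : DiagIdx (u + v))) ∘ₗ
        (TensorProduct.tensorTensorTensorComm k (P j) (P u) (Q l) (Q v)).toLinearMap)
  TensorProduct.lift
    (liftQOr0 (bal actQ l v) (liftQOr0 (bal actP j u) (TensorProduct.curry base)).flip).flip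

/-- The degree-`r` component of the tensor product of complexes
`(P ⊗_A P) ⊗ₖ (Q ⊗_B Q)`. -/
abbrev TensTens (actP : Bimod (k := k) A P) (actQ : Bimod (k := k) B Q) (r : ℤ) : Type u :=
  PQmod k (DTarget actP) (DTarget actQ) r

/-- The total map `σ⁻¹ : (P ⊗_A P) ⊗ₖ (Q ⊗_B Q) → (P ⊗ Q) ⊗_{A⊗B} (P ⊗ Q)` in degree `r`. -/
def sigmaInvTot (actP : Bimod (k := k) A P) (actQ : Bimod (k := k) B Q) (r : ℤ) :
    TensTens actP actQ r →ₗ[k] DTarget (prodBimod actP actQ) r :=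
  DirectSum.toModule k (DiagIdx r) _ fun w =>
    (DirectSum.toModule k _ _ fun ce : DiagIdx w.1.1 × DiagIdx w.1.2 =>
      inclDT (prodBimod actP actQ)
          (⟨(ce.1.1.1 + ce.2.1.1, ce.1.1.2 + ce.2.1.2), by
            have h1 := ce.1.2; have h2 := ce.2.2; have h3 := w.2; omega⟩ : DiagIdx r) ∘ₗ
        sigmaInv actP actQ ce.1.1.1 ce.1.1.2 ce.2.1.1 ce.2.1.2) ∘ₗ
    (TensorProduct.directSum k k
      (fun c : DiagIdx w.1.1 => TensA actP c.1.1 c.1.2)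
      (fun e : DiagIdx w.1.2 => TensA actQ e.1.1 e.1.2)).toLinearMap

/-- The map `Δ_P ⊗ Δ_Q : P ⊗ Q → (P ⊗_A P) ⊗ₖ (Q ⊗_B Q)` in degree `i`. -/
def deltaTensor (actP : Bimod (k := k) A P) (actQ : Bimod (k := k) B Q)
    (ΔP : ∀ i, P i →ₗ[k] DTarget actP i) (ΔQ : ∀ i, Q i →ₗ[k] DTarget actQ i) (i : ℤ) :
    PQmod k P Q i →ₗ[k] TensTens actP actQ i :=
  DirectSum.toModule k (DiagIdx i) _ fun p =>
    inclPQ (P := DTarget actP) (Q := DTarget actQ) p ∘ₗ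
      TensorProduct.map (ΔP p.1.1) (ΔQ p.1.2)

/-- The diagonal map `Δ_{P⊗Q} := σ⁻¹ ∘ (Δ_P ⊗ Δ_Q)` for the total complex `P ⊗ Q`. -/
def prodDelta (actP : Bimod (k := k) A P) (actQ : Bimod (k := k) B Q)
    (ΔP : ∀ i, P i →ₗ[k] DTarget actP i) (ΔQ : ∀ i, Q i →ₗ[k] DTarget actQ i) (i : ℤ) :
    PQmod k P Q i →ₗ[k] DTarget (prodBimod actP actQ) i :=
  sigmaInvTot actP actQ i ∘ₗ deltaTensor actP actQ ΔP ΔQ i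

/-- `ψ_{f⊗g} := ψ_f ⊗ (1⊗g)Δ_Q + (−1)^m (f⊗1)Δ_P ⊗ ψ_g` (with Koszul signs). -/
def psiCup (actP : Bimod (k := k) A P) (actQ : Bimod (k := k) B Q)
    (ΔP : ∀ i, P i →ₗ[k] DTarget actP i) (ΔQ : ∀ i, Q i →ₗ[k] DTarget actQ i)
    {m n : ℤ} (f : P m →ₗ[k] A) (g : Q n →ₗ[k] B)
    (ψf : ∀ i, P i →ₗ[k] P (i - m + 1)) (ψg : ∀ i, Q i →ₗ[k] Q (i - n + 1)) (r : ℤ) :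
    PQmod k P Q r →ₗ[k] PQmod k P Q (r - (m + n) + 1) :=
  DirectSum.toModule k (DiagIdx r) (PQmod k P Q (r - (m + n) + 1)) fun p =>
    ((n * p.1.1).negOnePow : ℤ) •
      (inclPQ (⟨(p.1.1 - m + 1, p.1.2 - n), by
          have := p.2; omega⟩ : DiagIdx (r - (m + n) + 1)) ∘ₗ
        TensorProduct.map (ψf p.1.1) (oneTensorF actQ g p.1.2 ∘ₗ ΔQ p.1.2))
    + ((m.negOnePow : ℤ) * (((n - 1) * p.1.1).negOnePow : ℤ)) •
      (inclPQ (⟨(p.1.1 - m, p.1.2 - n + 1), by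
          have := p.2; omega⟩ : DiagIdx (r - (m + n) + 1)) ∘ₗ
        TensorProduct.map (fTensorOne actP f p.1.1 ∘ₗ ΔP p.1.1) (ψg p.1.2))

/-- `ψ_{P⊗Q} := ψ_P ⊗ (μ_Q⊗1)Δ_Q + (1⊗μ_P)Δ_P ⊗ ψ_Q` (with Koszul signs). -/
def psiProd (actP : Bimod (k := k) A P) (actQ : Bimod (k := k) B Q)
    (ΔP : ∀ i, P i →ₗ[k] DTarget actP i) (ΔQ : ∀ i, Q i →ₗ[k] DTarget actQ i)
    (μP : P 0 →ₗ[k] A) (μQ : Q 0 →ₗ[k] B)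
    (ψP : ∀ i, P i →ₗ[k] P (i + 1)) (ψQ : ∀ i, Q i →ₗ[k] Q (i + 1)) (r : ℤ) :
    PQmod k P Q r →ₗ[k] PQmod k P Q (r + 1) :=
  DirectSum.toModule k (DiagIdx r) (PQmod k P Q (r + 1)) fun p =>
    (inclPQ (⟨(p.1.1 + 1, p.1.2), by have := p.2; omega⟩ : DiagIdx (r + 1)) ∘ₗ
      TensorProduct.map (ψP p.1.1)
        (pcast (show p.1.2 - 0 = p.1.2 by omega) ∘ₗ fTensorOne actQ μQ p.1.2 ∘ₗ ΔQ p.1.2))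
    + (p.1.1.negOnePow : ℤ) •
      (inclPQ (⟨(p.1.1, p.1.2 + 1), by have := p.2; omega⟩ : DiagIdx (r + 1)) ∘ₗ
        TensorProduct.map
          (pcast (show p.1.1 - 0 = p.1.1 by omega) ∘ₗ oneTensorF actP μP p.1.1 ∘ₗ ΔP p.1.1)
          (ψQ p.1.2))

/-- The cup product `(g ⊗ g') ∘ Δ`-collapse: the cochain `(P⊗_A P)_{n+n'} → A`
given on the `(n,n')` component by `x ⊗ y ↦ (−1)^{n'n} g(x)·g'(y)`. -/
def cupDT (act : Bimod (k := k) A P) {n n' : ℤ} (g : P n →ₗ[k] A) (g' : P n' →ₗ[k] A) :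
    DTarget act (n + n') →ₗ[k] A :=
  DirectSum.toModule k (DiagIdx (n + n')) A fun p =>
    if h : p.1.1 = n ∧ p.1.2 = n' then
      ((n' * n).negOnePow : ℤ) •
        (liftQOr0 _ (TensorProduct.lift (((LinearMap.mul k A) ∘ₗ g).compl₂ g')) ∘ₗ
          tcast act h.1 h.2)
    else 0

end Product2

section Product3

variable {B : Type u} [Ring B] [Algebra k B]
variable {Q : ℤ → Type u} [∀ i, AddCommGroup (Q i)] [∀ i, Module k (Q i)]

/-- Component of the Grimley–Nguyen–Witherspoon map `σ`:
`(x⊗y) ⊗ (x'⊗y') ↦ (−1)^{ju} (x⊗x') ⊗ (y⊗y')` on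
`(P_i ⊗ Q_j) ⊗ (P_u ⊗ Q_v)`. -/
def sigmaFwdComp (actP : Bimod (k := k) A P) (actQ : Bimod (k := k) B Q)
    {s t r : ℤ} (hst : s + t = r) (ce : DiagIdx s × DiagIdx t) :
    ((P ce.1.1.1 ⊗[k] Q ce.1.1.2) ⊗[k] (P ce.2.1.1 ⊗[k] Q ce.2.1.2)) →ₗ[k]
      TensTens actP actQ r :=
  ((ce.1.1.2 * ce.2.1.1).negOnePow : ℤ) •
    (inclPQ (P := DTarget actP) (Q := DTarget actQ)
        (⟨(ce.1.1.1 + ce.2.1.1, ce.1.1.2 + ce.2.1.2), by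
          have h1 := ce.1.2; have h2 := ce.2.2; omega⟩ : DiagIdx r) ∘ₗ
      TensorProduct.map
        (inclDT actP (⟨(ce.1.1.1, ce.2.1.1), rfl⟩ : DiagIdx (ce.1.1.1 + ce.2.1.1)) ∘ₗ
          (bal actP ce.1.1.1 ce.2.1.1).mkQ)
        (inclDT actQ (⟨(ce.1.1.2, ce.2.1.2), rfl⟩ : DiagIdx (ce.1.1.2 + ce.2.1.2)) ∘ₗ
          (bal actQ ce.1.1.2 ce.2.1.2).mkQ) ∘ₗ
      (TensorProduct.tensorTensorTensorComm k
        (P ce.1.1.1) (Q ce.1.1.2) (P ce.2.1.1) (Q ce.2.1.2)).toLinearMap)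

/-- The map `σ` before descending to the balanced tensor product. -/
def sigmaFwdPre (actP : Bimod (k := k) A P) (actQ : Bimod (k := k) B Q)
    {s t r : ℤ} (hst : s + t = r) :
    (PQmod k P Q s ⊗[k] PQmod k P Q t) →ₗ[k] TensTens actP actQ r :=
  (DirectSum.toModule k (DiagIdx s × DiagIdx t) (TensTens actP actQ r)
      (fun ce => sigmaFwdComp actP actQ hst ce)) ∘ₗ
    (TensorProduct.directSum k k
      (fun c : DiagIdx s => P c.1.1 ⊗[k] Q c.1.2)
      (fun e : DiagIdx t => P e.1.1 ⊗[k] Q e.1.2)).toLinearMap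

/-- The Grimley–Nguyen–Witherspoon map
`σ : (P ⊗ Q) ⊗_{A⊗B} (P ⊗ Q) → (P ⊗_A P) ⊗ₖ (Q ⊗_B Q)`, given on the component
`(P_i ⊗ Q_j) ⊗_{A⊗B} (P_u ⊗ Q_v)` by
`(x⊗y) ⊗ (x'⊗y') ↦ (−1)^{ju} (x⊗x') ⊗ (y⊗y')`. -/
def sigmaFwdAt (actP : Bimod (k := k) A P) (actQ : Bimod (k := k) B Q)
    {s t r : ℤ} (hst : s + t = r) :
    TensA (prodBimod actP actQ) s t →ₗ[k] TensTens actP actQ r :=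
  liftQOr0 (bal (prodBimod actP actQ) s t) (sigmaFwdPre actP actQ hst)

/-- The total map `σ` in degree `r`. -/
def sigmaFwd (actP : Bimod (k := k) A P) (actQ : Bimod (k := k) B Q) (r : ℤ) :
    DTarget (prodBimod actP actQ) r →ₗ[k] TensTens actP actQ r :=
  DirectSum.toModule k (DiagIdx r) (TensTens actP actQ r) fun st =>
    sigmaFwdAt actP actQ st.2

/-- Left action of the pure tensor `a ⊗ b ∈ A ⊗ₖ B` on `(P ⊗_A P) ⊗ₖ (Q ⊗_B Q)`. -/
def actLTensTens (actP : Bimod (k := k) A P) (actQ : Bimod (k := k) B Q) (r : ℤ)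
    (a : A) (b : B) : TensTens actP actQ r →ₗ[k] TensTens actP actQ r :=
  DFinsupp.mapRange.linearMap
    (fun w : DiagIdx r => TensorProduct.map (actLDT actP w.1.1 a) (actLDT actQ w.1.2 b))

/-- Right action of the pure tensor `a ⊗ b ∈ A ⊗ₖ B` on `(P ⊗_A P) ⊗ₖ (Q ⊗_B Q)`. -/
def actRTensTens (actP : Bimod (k := k) A P) (actQ : Bimod (k := k) B Q) (r : ℤ)
    (a : A) (b : B) : TensTens actP actQ r →ₗ[k] TensTens actP actQ r :=
  DFinsupp.mapRange.linearMap
    (fun w : DiagIdx r => TensorProduct.map (actRDT actP w.1.1 (op a)) (actRDT actQ w.1.2 (op b)))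

end Product3

/-! ### The concrete example: the truncated polynomial ring `k[x]/(x²)` -/

section Concrete

open Polynomial

/-- The truncated polynomial ring `A = k[x]/(x²)`. -/
abbrev TP (k : Type u) [Field k] : Type u :=
  Polynomial k ⧸ Ideal.span ({Polynomial.X ^ 2} : Set (Polynomial k))

/-- The generator `x` of `k[x]/(x²)`. -/
def xGen (k : Type u) [Field k] : TP k := Ideal.Quotient.mk _ Polynomial.X

/-- `R = A ⊗ₖ A`, the enveloping algebra of the commutative algebra `A`. -/
abbrev RA (k : Type u) [Field k] : Type u := TP k ⊗[k] TP k

instance : CommRing (RA k) := inferInstance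
instance : Module (RA k) (RA k) := Semiring.toModule

/-- `u = x⊗1 − 1⊗x`. -/
def uE (k : Type u) [Field k] : RA k := xGen k ⊗ₜ[k] 1 - 1 ⊗ₜ[k] xGen k

/-- `v = x⊗1 + 1⊗x`. -/
def vE (k : Type u) [Field k] : RA k := xGen k ⊗ₜ[k] 1 + 1 ⊗ₜ[k] xGen k

/-- The components of the 2-periodic resolution: `P i = R` for `i ≥ 0` and `0`
(the trivial module) for `i < 0`. -/
def PC (k : Type u) [Field k] : ℤ → Type u
  | .ofNat _ => RA k
  | .negSucc _ => PUnit

instance : ∀ i, AddCommGroup (PC k i)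
  | .ofNat _ => inferInstanceAs (AddCommGroup (RA k))
  | .negSucc _ => inferInstanceAs (AddCommGroup PUnit)

instance : ∀ i, Module k (PC k i)
  | .ofNat _ => inferInstanceAs (Module k (RA k))
  | .negSucc _ => inferInstanceAs (Module k PUnit.{u+1})

/-- Identification of the nonnegative components with `R`. -/
def toR (k : Type u) [Field k] : ∀ (i : ℤ), 0 ≤ i → (PC k i ≃ₗ[k] RA k)
  | .ofNat _, _ => LinearEquiv.refl k (RA k)
  | .negSucc n, h => absurd h (by have := Int.negSucc_lt_zero n; omega)

/-- The free generator `e_i = 1 ⊗ 1` of `P i` (`e_i = 0` for `i < 0`). -/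
def eB (k : Type u) [Field k] : ∀ i : ℤ, PC k i
  | .ofNat _ => (1 : RA k)
  | .negSucc _ => PUnit.unit

/-- Left multiplication of `R` on itself, as an algebra map into endomorphisms. -/
def mulHom (k : Type u) [Field k] : RA k →ₐ[k] Module.End k (RA k) :=
  Algebra.lsmul k k (RA k)

/-- `unop` as an algebra map, for the commutative algebra `A`. -/
def unopAlg (k : Type u) [Field k] : (TP k)ᵐᵒᵖ →ₐ[k] TP k where
  toFun := unop
  map_one' := rfl
  map_mul' z w := by simp [mul_comm]
  map_zero' := rfl
  map_add' _ _ := rfl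
  commutes' _ := rfl

universe v

/-- The unique algebra action on the trivial module. -/
def trivAct (k : Type u) [Field k] (C : Type u) [Ring C] [Algebra k C] :
    C →ₐ[k] Module.End k PUnit.{v+1} where
  toFun _ := 1
  map_one' := rfl
  map_mul' _ _ := Subsingleton.elim _ _
  map_zero' := Subsingleton.elim _ _
  map_add' _ _ := Subsingleton.elim _ _
  commutes' _ := Subsingleton.elim _ _

/-- The `A`-bimodule structure on the resolution `P`: in nonnegative degrees,
`a` acts on the left by multiplication by `a⊗1` and on the right by
multiplication by `1⊗a`. -/
def actC (k : Type u) [Field k] : Bimod (k := k) (TP k) (PC k) where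
  actL
    | .ofNat _n => (mulHom k).comp (Algebra.TensorProduct.includeLeft (S := k))
    | .negSucc _n => trivAct k (TP k)
  actR
    | .ofNat _n => ((mulHom k).comp Algebra.TensorProduct.includeRight).comp (unopAlg k)
    | .negSucc _n => trivAct k (TP k)ᵐᵒᵖ

/-- The differential of the resolution `P`: multiplication by `u` in odd degrees
and by `v` in even positive degrees. -/
def dC (k : Type u) [Field k] (i : ℤ) : PC k i →ₗ[k] PC k (i - 1) :=
  letI := Classical.dec (1 ≤ i)
  if h : 1 ≤ i then
    ((toR k (i - 1) (by omega)).symm.toLinearMap ∘ₗ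
      LinearMap.mulLeft k (if Odd i then uE k else vE k) ∘ₗ
      (toR k i (by omega)).toLinearMap)
  else 0

/-- The augmentation `μ : P 0 = A ⊗ A → A`, the multiplication map. -/
def muC (k : Type u) [Field k] : PC k 0 →ₗ[k] TP k :=
  LinearMap.mul' k (TP k) ∘ₗ (toR k 0 le_rfl).toLinearMap

end Concrete

/-- In this file the truncated polynomial algebra is `B = k[y]/(y²)`; we write `yGen`
for its generator `y`. (`B` is the same algebra as `A = k[x]/(x²)`, with the variable
named `y`, and `Q` is the same 2-periodic resolution with basis elements `e'_i`.) -/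
abbrev yGen (k : Type u) [Field k] : TP k := xGen k


section AuxHL
variable {k : Type u} [Field k]


-- basic toR lemmas
lemma toR_eB (i : ℤ) (h : 0 ≤ i) : toR k i h (eB k i) = 1 := by
  cases i with
  | ofNat n => rfl
  | negSucc n => exact absurd h (by have := Int.negSucc_lt_zero n; omega)

lemma toR_actL (i : ℤ) (h : 0 ≤ i) (a : TP k) (z : PC k i) :
    toR k i h ((actC k).actL i a z) = a ⊗ₜ[k] 1 * toR k i h z := by
  cases i with
  | ofNat n => rfl
  | negSucc n => exact absurd h (by have := Int.negSucc_lt_zero n; omega)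

lemma toR_actR (i : ℤ) (h : 0 ≤ i) (b : TP k) (z : PC k i) :
    toR k i h ((actC k).actR i (op b) z) = 1 ⊗ₜ[k] b * toR k i h z := by
  cases i with
  | ofNat n => rfl
  | negSucc n => exact absurd h (by have := Int.negSucc_lt_zero n; omega)

lemma toR_irrel (i : ℤ) (h h' : 0 ≤ i) : toR k i h = toR k i h' := rfl

lemma toR_pcast {i j : ℤ} (hij : i = j) (h : 0 ≤ i) (h' : 0 ≤ j) (z : PC k i) :
    toR k j h' (pcast (k := k) (P := PC k) hij z) = toR k i h z := by
  subst hij; rfl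

lemma pcast_eB {i j : ℤ} (hij : i = j) : pcast (k := k) (P := PC k) hij (eB k i) = eB k j := by
  subst hij; rfl

lemma toR_dC (i : ℤ) (h1 : 1 ≤ i) (z : PC k i) (h' : 0 ≤ i - 1) (h : 0 ≤ i) :
    toR k (i-1) h' (dC k i z) = (if Odd i then uE k else vE k) * toR k i h z := by
  rw [dC, dif_pos h1]
  simp

lemma dC_neg (i : ℤ) (h : ¬ 1 ≤ i) : dC k i = 0 := by
  rw [dC, dif_neg h]

lemma PC_subsingleton (i : ℤ) (h : i < 0) : Subsingleton (PC k i) := by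
  cases i with
  | ofNat n => exact absurd h (not_lt.mpr (Int.ofNat_nonneg n))
  | negSucc n => exact inferInstanceAs (Subsingleton PUnit)

lemma eB_neg (i : ℤ) (h : i < 0) : eB k i = 0 := by
  have := PC_subsingleton (k := k) i h
  exact Subsingleton.elim _ _
lemma liftQOr0_mk {X Z : Type u} [AddCommGroup X] [Module k X] [AddCommGroup Z] [Module k Z]
    (S : Submodule k X) (f : X →ₗ[k] Z) (h : S ≤ LinearMap.ker f) (x : X) :
    liftQOr0 S f (Submodule.Quotient.mk x) = f x := by
  rw [liftQOr0]
  split_ifs with h'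
  · rfl

lemma mapQOr0_mk {X Y : Type u} [AddCommGroup X] [Module k X] [AddCommGroup Y] [Module k Y]
    (S : Submodule k X) (T : Submodule k Y) (f : X →ₗ[k] Y) (h : S ≤ T.comap f) (x : X) :
    mapQOr0 S T f (Submodule.Quotient.mk x) = Submodule.Quotient.mk (f x) := by
  rw [mapQOr0]
  split_ifs with h'
  · rfl

variable {A : Type u} [Ring A] [Algebra k A]
variable {P : ℤ → Type u} [∀ i, AddCommGroup (P i)] [∀ i, Module k (P i)]

lemma tcast_mk (act : Bimod (k := k) A P) {j j' l l' : ℤ} (h1 : j = j') (h2 : l = l')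
    (x : P j) (y : P l) :
    tcast act h1 h2 (tmulA act x y) =
      tmulA act (pcast (k := k) (P := P) h1 x) (pcast (k := k) (P := P) h2 y) := by
  subst h1; subst h2; rfl

lemma collapseL_mk (act : Bimod (k := k) A P) {m : ℤ} (f : P m →ₗ[k] A)
    (hf : IsBimapToAlg act f) (l : ℤ) (x : P m) (y : P l) :
    collapseL act f l (tmulA act x y) = act.actL l (f x) y := by
  refine liftQOr0_mk _ _ ?_ _
  rw [bal, Submodule.span_le]
  rintro _ ⟨a, x', y', rfl⟩
  simp only [SetLike.mem_coe, LinearMap.mem_ker, map_sub, TensorProduct.lift.tmul,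
    LinearMap.coe_comp, Function.comp_apply, AlgHom.toLinearMap_apply]
  rw [hf.2, map_mul]
  simp [Module.End.mul_apply]

lemma collapseR_mk (act : Bimod (k := k) A P) {m : ℤ} (f : P m →ₗ[k] A)
    (hf : IsBimapToAlg act f) (j : ℤ) (x : P j) (y : P m) :
    collapseR act f j (tmulA act x y) = act.actR j (op (f y)) x := by
  refine liftQOr0_mk _ _ ?_ _
  rw [bal, Submodule.span_le]
  rintro _ ⟨a, x', y', rfl⟩
  simp only [SetLike.mem_coe, LinearMap.mem_ker, map_sub, TensorProduct.lift.tmul,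
    LinearMap.flip_apply, LinearMap.coe_comp, Function.comp_apply, AlgHom.toLinearMap_apply,
    LinearEquiv.coe_coe, MulOpposite.coe_opLinearEquiv]
  rw [hf.1, op_mul, map_mul]
  simp [Module.End.mul_apply]

lemma mapTensA_mk (act : Bimod (k := k) A P) {j l j' l' : ℤ}
    (φ : P j →ₗ[k] P j') (ψ : P l →ₗ[k] P l')
    (hφ : ∀ a : A, φ ∘ₗ act.actR j (op a) = act.actR j' (op a) ∘ₗ φ)
    (hψ : ∀ a : A, ψ ∘ₗ act.actL l a = act.actL l' a ∘ₗ ψ)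
    (x : P j) (y : P l) :
    mapTensA act φ ψ (tmulA act x y) = tmulA act (φ x) (ψ y) := by
  refine mapQOr0_mk _ _ _ ?_ _
  rw [bal, Submodule.span_le]
  rintro _ ⟨a, x', y', rfl⟩
  simp only [SetLike.mem_coe, Submodule.mem_comap, map_sub, TensorProduct.map_tmul]
  rw [show φ (act.actR j (op a) x') = act.actR j' (op a) (φ x') from LinearMap.congr_fun (hφ a) x',
    show ψ (act.actL l a y') = act.actL l' a (ψ y') from LinearMap.congr_fun (hψ a) y']
  exact Submodule.subset_span ⟨a, φ x', ψ y', rfl⟩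
variable {A : Type u} [Ring A] [Algebra k A]
variable {P : ℤ → Type u} [∀ i, AddCommGroup (P i)] [∀ i, Module k (P i)]

lemma pcast_actL (act : Bimod (k := k) A P) {i j : ℤ} (h : i = j) (a : A) (z : P i) :
    pcast (k := k) (P := P) h (act.actL i a z) = act.actL j a (pcast (k := k) (P := P) h z) := by
  subst h; rfl

lemma pcast_actR (act : Bimod (k := k) A P) {i j : ℤ} (h : i = j) (b : Aᵐᵒᵖ) (z : P i) :
    pcast (k := k) (P := P) h (act.actR i b z) = act.actR j b (pcast (k := k) (P := P) h z) := by
  subst h; rfl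

-- direct sum helpers
lemma mapRange_lof {ι : Type} [DecidableEq ι] {M M' : ι → Type u}
    [∀ p, AddCommGroup (M p)] [∀ p, Module k (M p)]
    [∀ p, AddCommGroup (M' p)] [∀ p, Module k (M' p)]
    (F : ∀ p, M p →ₗ[k] M' p) (p : ι) (x : M p) :
    DFinsupp.mapRange.linearMap F (DirectSum.lof k ι M p x)
      = DirectSum.lof k ι M' p (F p x) := by
  show DFinsupp.mapRange (fun i x => F i x) (fun i => (F i).map_zero) (DFinsupp.single p x)
      = DFinsupp.single p (F p x)
  exact DFinsupp.mapRange_single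

-- actC lemmas
lemma actC_comm : (actC k).IsCommuting := by
  intro i a b
  rcases lt_or_ge i 0 with h|h
  · have := PC_subsingleton (k := k) i h
    ext z
    exact Subsingleton.elim _ _
  · ext z
    simp only [Module.End.mul_apply]
    apply (toR k i h).injective
    rw [← op_unop b, toR_actL _ h, toR_actR _ h, toR_actR _ h, toR_actL _ h]
    ring

lemma PC_ext {i : ℤ} (h : 0 ≤ i) {M : Type u} [AddCommGroup M] [Module k M]
    (F G : PC k i →ₗ[k] M)
    (H : ∀ a b : TP k,
      F ((actC k).actL i a ((actC k).actR i (op b) (eB k i)))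
        = G ((actC k).actL i a ((actC k).actR i (op b) (eB k i)))) : F = G := by
  have key : F ∘ₗ (toR k i h).symm.toLinearMap = G ∘ₗ (toR k i h).symm.toLinearMap := by
    refine TensorProduct.ext' fun a b => ?_
    have hx : (toR k i h).symm (a ⊗ₜ[k] b)
        = (actC k).actL i a ((actC k).actR i (op b) (eB k i)) := by
      apply (toR k i h).injective
      rw [LinearEquiv.apply_symm_apply, toR_actL _ h, toR_actR _ h, toR_eB]
      rw [mul_one, Algebra.TensorProduct.tmul_mul_tmul, mul_one, one_mul]
    simp only [LinearMap.coe_comp, Function.comp_apply, LinearEquiv.coe_coe]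
    rw [hx]
    exact H a b
  ext z
  have h2 := LinearMap.congr_fun key (toR k i h z)
  simpa [LinearEquiv.symm_apply_apply] using h2

lemma dC_bimap (i : ℤ) : IsBimap (actC k) (dC k i) := by
  by_cases h1 : 1 ≤ i
  · constructor
    · intro a
      ext z
      apply (toR k (i-1) (by omega)).injective
      simp only [LinearMap.coe_comp, Function.comp_apply]
      rw [toR_actL _ (by omega), toR_dC i h1 _ _ (by omega), toR_dC i h1 _ _ (by omega),
        toR_actL _ (by omega)]
      ring
    · intro b
      ext z
      apply (toR k (i-1) (by omega)).injective
      simp only [LinearMap.coe_comp, Function.comp_apply]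
      rw [show b = op (unop b) from rfl, toR_actR _ (by omega), toR_dC i h1 _ _ (by omega),
        toR_dC i h1 _ _ (by omega), toR_actR _ (by omega)]
      ring
  · constructor
    · intro a; ext z
      simp [dC_neg i h1]
    · intro b; ext z
      simp [dC_neg i h1]

lemma dC_eB (i : ℤ) (h1 : 1 ≤ i) :
    dC k i (eB k i) = (actC k).actL (i-1) (xGen k) (eB k (i-1))
      + (if Odd i then (-1:ℤ) else 1) • (actC k).actR (i-1) (op (xGen k)) (eB k (i-1)) := by
  apply (toR k (i-1) (by omega)).injective
  rw [toR_dC i h1 _ _ (by omega), toR_eB]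
  rw [map_add, map_zsmul, toR_actL _ (by omega), toR_actR _ (by omega), toR_eB]
  split_ifs <;> simp [uE, vE, sub_eq_add_neg]
lemma pcast_refl {i : ℤ} (h : i = i) (z : P i) : pcast (k := k) (P := P) h z = z := rfl

lemma comm_LR (act : Bimod (k := k) A P) (hc : act.IsCommuting) (i : ℤ) (a : A) (b : Aᵐᵒᵖ) :
    act.actL i a ∘ₗ act.actR i b = act.actR i b ∘ₗ act.actL i a := by
  rw [← Module.End.mul_eq_comp, ← Module.End.mul_eq_comp]
  exact hc i a b

lemma comm_LR' (act : Bimod (k := k) A P) (hc : act.IsCommuting) (i : ℤ) (a : A) (b : Aᵐᵒᵖ)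
    (z : P i) : act.actL i a (act.actR i b z) = act.actR i b (act.actL i a z) :=
  LinearMap.congr_fun (comm_LR act hc i a b) z

lemma actLTensA_mk (act : Bimod (k := k) A P) (hc : act.IsCommuting) (j l : ℤ) (a : A)
    (x : P j) (y : P l) :
    actLTensA act j l a (tmulA act x y) = tmulA act (act.actL j a x) y :=
  mapTensA_mk act _ _ (fun c => comm_LR act hc j a (op c)) (fun _ => rfl) x y

lemma actRTensA_mk (act : Bimod (k := k) A P) (hc : act.IsCommuting) (j l : ℤ) (b : Aᵐᵒᵖ)
    (x : P j) (y : P l) :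
    actRTensA act j l b (tmulA act x y) = tmulA act x (act.actR l b y) :=
  mapTensA_mk act _ _ (fun _ => rfl) (fun c => (comm_LR act hc l c b).symm) x y

lemma fTensorOne_lof_ne (act : Bimod (k := k) A P) {m i : ℤ} (f : P m →ₗ[k] A)
    (p : DiagIdx i) (hp : p.1.1 ≠ m) (z : TensA act p.1.1 p.1.2) :
    fTensorOne act f i (inclDT act p z) = 0 := by
  rw [fTensorOne, inclDT, DirectSum.toModule_lof, dif_neg hp]
  rfl

lemma fTensorOne_lof_eq (act : Bimod (k := k) A P) {m i : ℤ} (f : P m →ₗ[k] A)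
    (p : DiagIdx i) (hp : p.1.1 = m) (z : TensA act p.1.1 p.1.2) :
    fTensorOne act f i (inclDT act p z)
      = pcast (k := k) (P := P) (show p.1.2 = i - m by have := p.2; omega)
          (collapseL act f p.1.2 (tcast act hp rfl z)) := by
  rw [fTensorOne, inclDT, DirectSum.toModule_lof, dif_pos hp]
  rfl

lemma oneTensorF_lof_ne (act : Bimod (k := k) A P) {m i : ℤ} (f : P m →ₗ[k] A)
    (p : DiagIdx i) (hp : p.1.2 ≠ m) (z : TensA act p.1.1 p.1.2) :
    oneTensorF act f i (inclDT act p z) = 0 := by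
  rw [oneTensorF, inclDT, DirectSum.toModule_lof, dif_neg hp]
  rfl

lemma oneTensorF_lof_eq (act : Bimod (k := k) A P) {m i : ℤ} (f : P m →ₗ[k] A)
    (p : DiagIdx i) (hp : p.1.2 = m) (z : TensA act p.1.1 p.1.2) :
    oneTensorF act f i (inclDT act p z)
      = ((m * p.1.1).negOnePow : ℤ) •
          pcast (k := k) (P := P) (show p.1.1 = i - m by have := p.2; omega)
            (collapseR act f p.1.1 (tcast act rfl hp z)) := by
  rw [oneTensorF, inclDT, DirectSum.toModule_lof, dif_pos hp]
  rfl

lemma lof_eq_inclDT (act : Bimod (k := k) A P) {i : ℤ} (p : DiagIdx i) :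
    DirectSum.lof k (DiagIdx i) (fun q : DiagIdx i => TensA act q.1.1 q.1.2) p
      = inclDT act p := rfl

lemma actLDT_lof (act : Bimod (k := k) A P) (i : ℤ) (a : A) (p : DiagIdx i)
    (z : TensA act p.1.1 p.1.2) :
    actLDT act i a (inclDT act p z) = inclDT act p (actLTensA act p.1.1 p.1.2 a z) :=
  mapRange_lof (M := fun q : DiagIdx i => TensA act q.1.1 q.1.2)
    (M' := fun q : DiagIdx i => TensA act q.1.1 q.1.2)
    (fun q => actLTensA act q.1.1 q.1.2 a) p z

lemma actRDT_lof (act : Bimod (k := k) A P) (i : ℤ) (b : Aᵐᵒᵖ) (p : DiagIdx i)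
    (z : TensA act p.1.1 p.1.2) :
    actRDT act i b (inclDT act p z) = inclDT act p (actRTensA act p.1.1 p.1.2 b z) :=
  mapRange_lof (M := fun q : DiagIdx i => TensA act q.1.1 q.1.2)
    (M' := fun q : DiagIdx i => TensA act q.1.1 q.1.2)
    (fun q => actRTensA act q.1.1 q.1.2 b) p z

lemma fTensorOne_actLDT (act : Bimod (k := k) A P) (hc : act.IsCommuting) {m : ℤ}
    (f : P m →ₗ[k] A) (hf : IsBimapToAlg act f) (i : ℤ) (a : A) :
    fTensorOne act f i ∘ₗ actLDT act i a = act.actL (i - m) a ∘ₗ fTensorOne act f i := by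
  refine DirectSum.linearMap_ext k fun p => ?_
  refine Submodule.linearMap_qext _ ?_
  refine TensorProduct.ext' fun x y => ?_
  simp only [LinearMap.coe_comp, Function.comp_apply, Submodule.mkQ_apply]
  rw [show (Submodule.Quotient.mk (x ⊗ₜ[k] y) : TensA act p.1.1 p.1.2) = tmulA act x y from rfl]
  rw [lof_eq_inclDT act p]
  rw [actLDT_lof, actLTensA_mk act hc]
  by_cases hp : p.1.1 = m
  · rw [fTensorOne_lof_eq act f p hp, fTensorOne_lof_eq act f p hp, tcast_mk, tcast_mk,
      collapseL_mk act f hf, collapseL_mk act f hf]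
    rw [pcast_actL act hp a x, hf.1, map_mul, Module.End.mul_apply, pcast_actL]
  · rw [fTensorOne_lof_ne act f p hp, fTensorOne_lof_ne act f p hp, map_zero]

lemma fTensorOne_actRDT (act : Bimod (k := k) A P) (hc : act.IsCommuting) {m : ℤ}
    (f : P m →ₗ[k] A) (hf : IsBimapToAlg act f) (i : ℤ) (b : Aᵐᵒᵖ) :
    fTensorOne act f i ∘ₗ actRDT act i b = act.actR (i - m) b ∘ₗ fTensorOne act f i := by
  refine DirectSum.linearMap_ext k fun p => ?_
  refine Submodule.linearMap_qext _ ?_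
  refine TensorProduct.ext' fun x y => ?_
  simp only [LinearMap.coe_comp, Function.comp_apply, Submodule.mkQ_apply]
  rw [show (Submodule.Quotient.mk (x ⊗ₜ[k] y) : TensA act p.1.1 p.1.2) = tmulA act x y from rfl]
  rw [lof_eq_inclDT act p]
  rw [actRDT_lof, actRTensA_mk act hc]
  by_cases hp : p.1.1 = m
  · rw [fTensorOne_lof_eq act f p hp, fTensorOne_lof_eq act f p hp, tcast_mk, tcast_mk,
      collapseL_mk act f hf, collapseL_mk act f hf]
    simp only [pcast_refl]
    rw [comm_LR' act hc, pcast_actR]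
  · rw [fTensorOne_lof_ne act f p hp, fTensorOne_lof_ne act f p hp, map_zero]

lemma oneTensorF_actLDT (act : Bimod (k := k) A P) (hc : act.IsCommuting) {m : ℤ}
    (f : P m →ₗ[k] A) (hf : IsBimapToAlg act f) (i : ℤ) (a : A) :
    oneTensorF act f i ∘ₗ actLDT act i a = act.actL (i - m) a ∘ₗ oneTensorF act f i := by
  refine DirectSum.linearMap_ext k fun p => ?_
  refine Submodule.linearMap_qext _ ?_
  refine TensorProduct.ext' fun x y => ?_
  simp only [LinearMap.coe_comp, Function.comp_apply, Submodule.mkQ_apply]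
  rw [show (Submodule.Quotient.mk (x ⊗ₜ[k] y) : TensA act p.1.1 p.1.2) = tmulA act x y from rfl]
  rw [lof_eq_inclDT act p]
  rw [actLDT_lof, actLTensA_mk act hc]
  by_cases hp : p.1.2 = m
  · rw [oneTensorF_lof_eq act f p hp, oneTensorF_lof_eq act f p hp, tcast_mk, tcast_mk,
      collapseR_mk act f hf, collapseR_mk act f hf, map_zsmul]
    simp only [pcast_refl]
    rw [← comm_LR' act hc, pcast_actL]
  · rw [oneTensorF_lof_ne act f p hp, oneTensorF_lof_ne act f p hp, map_zero]

lemma oneTensorF_actRDT (act : Bimod (k := k) A P) (hc : act.IsCommuting) {m : ℤ}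
    (f : P m →ₗ[k] A) (hf : IsBimapToAlg act f) (i : ℤ) (b : Aᵐᵒᵖ) :
    oneTensorF act f i ∘ₗ actRDT act i b = act.actR (i - m) b ∘ₗ oneTensorF act f i := by
  refine DirectSum.linearMap_ext k fun p => ?_
  refine Submodule.linearMap_qext _ ?_
  refine TensorProduct.ext' fun x y => ?_
  simp only [LinearMap.coe_comp, Function.comp_apply, Submodule.mkQ_apply]
  rw [show (Submodule.Quotient.mk (x ⊗ₜ[k] y) : TensA act p.1.1 p.1.2) = tmulA act x y from rfl]
  rw [lof_eq_inclDT act p]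
  rw [actRDT_lof, actRTensA_mk act hc]
  by_cases hp : p.1.2 = m
  · rw [oneTensorF_lof_eq act f p hp, oneTensorF_lof_eq act f p hp, tcast_mk, tcast_mk,
      collapseR_mk act f hf, collapseR_mk act f hf, map_zsmul]
    simp only [pcast_refl]
    rw [pcast_actR act hp b y, ← op_unop b, hf.2, op_mul, map_mul, Module.End.mul_apply,
      pcast_actR]
  · rw [oneTensorF_lof_ne act f p hp, oneTensorF_lof_ne act f p hp, map_zero]

-- value lemmas, specific to the concrete resolution
lemma toR_pcast' {i j : ℤ} (hij : i = j) (h' : 0 ≤ j) (z : PC k i) :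
    toR k j h' (pcast (k := k) (P := PC k) hij z) = toR k i (by omega) z := by
  subst hij; rfl

lemma toR_dC' (i : ℤ) (h1 : 1 ≤ i) (h' : 0 ≤ i - 1) (z : PC k i) :
    toR k (i-1) h' (dC k i z) = (if Odd i then uE k else vE k) * toR k i (by omega) z :=
  toR_dC i h1 z h' (by omega)

section Vals

variable (Δ : ∀ i, PC k i →ₗ[k] DTarget (actC k) i)
variable (g : PC k 2 →ₗ[k] TP k)

lemma val_fT
    (hΔval : ∀ i : ℤ, 0 ≤ i → Δ i (eB k i) =
      ∑ j ∈ Finset.range (i.toNat + 1),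
        inclDT (actC k) (⟨((j : ℤ), i - (j : ℤ)), (by omega : (j : ℤ) + (i - (j : ℤ)) = i)⟩ : DiagIdx i)
          (tmulA (actC k) (eB k (j : ℤ)) (eB k (i - (j : ℤ)))))
    (hgbim : IsBimapToAlg (actC k) g) (hgval : g (eB k 2) = yGen k)
    (i : ℤ) (h : 0 ≤ i) :
    fTensorOne (actC k) g i (Δ i (eB k i))
      = if 2 ≤ i then (actC k).actL (i-2) (yGen k) (eB k (i-2)) else 0 := by
  rw [hΔval i h, map_sum]
  by_cases h2 : 2 ≤ i
  · rw [if_pos h2]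
    rw [Finset.sum_eq_single_of_mem 2 (by rw [Finset.mem_range]; omega)]
    · rw [fTensorOne_lof_eq (actC k) g _ (show (((2:ℕ)):ℤ) = 2 by norm_num), tcast_mk,
        collapseL_mk _ g hgbim]
      simp only [pcast_refl, pcast_eB, hgval]
      simp only [Nat.cast_ofNat, hgval]
    · intro b _ hbne
      exact fTensorOne_lof_ne (actC k) g _
        (fun hh => hbne (by exact_mod_cast (show ((b:ℕ):ℤ) = 2 from hh))) _
  · rw [if_neg h2]
    refine Finset.sum_eq_zero fun b hb => ?_
    rw [Finset.mem_range] at hb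
    exact fTensorOne_lof_ne (actC k) g _
      (fun hh => by have : ((b:ℕ):ℤ) = 2 := hh; omega) _

lemma val_oT
    (hΔval : ∀ i : ℤ, 0 ≤ i → Δ i (eB k i) =
      ∑ j ∈ Finset.range (i.toNat + 1),
        inclDT (actC k) (⟨((j : ℤ), i - (j : ℤ)), (by omega : (j : ℤ) + (i - (j : ℤ)) = i)⟩ : DiagIdx i)
          (tmulA (actC k) (eB k (j : ℤ)) (eB k (i - (j : ℤ)))))
    (hgbim : IsBimapToAlg (actC k) g) (hgval : g (eB k 2) = yGen k)
    (i : ℤ) (h : 0 ≤ i) :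
    oneTensorF (actC k) g i (Δ i (eB k i))
      = if 2 ≤ i then (actC k).actR (i-2) (op (yGen k)) (eB k (i-2)) else 0 := by
  rw [hΔval i h, map_sum]
  by_cases h2 : 2 ≤ i
  · rw [if_pos h2]
    rw [Finset.sum_eq_single_of_mem (i.toNat - 2) (by rw [Finset.mem_range]; omega)]
    · rw [oneTensorF_lof_eq (actC k) g _ (show i - ((i.toNat - 2 : ℕ) : ℤ) = 2 by omega),
        tcast_mk, collapseR_mk _ g hgbim]
      simp only [pcast_refl, pcast_eB, hgval]
      rw [Int.negOnePow_two_mul, Units.val_one, one_smul, pcast_actR, pcast_eB]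
    · intro b _ hbne
      refine oneTensorF_lof_ne (actC k) g _ (fun hh => hbne ?_) _
      have : i - ((b:ℕ):ℤ) = 2 := hh
      omega
  · rw [if_neg h2]
    refine Finset.sum_eq_zero fun b hb => ?_
    rw [Finset.mem_range] at hb
    exact oneTensorF_lof_ne (actC k) g _
      (fun hh => by have : i - ((b:ℕ):ℤ) = 2 := hh; omega) _

end Vals

end AuxHL

/-!
STATEMENT 14: Let `g ∈ Hom_{B^e}(Q_2, B)` be the cocycle with `g(e'_2) = y` (and
`g(e'_i) = 0` for `i ≠ 2`), and let `ψ_g` be the family of `(B⊗B)`-linear maps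
`Q_i → Q_{i−1}` with `ψ_g(e'_{2j}) = e'_{2j−1}` and `ψ_g(e'_{2j−1}) = 0`. Then for
every `i`, `(d∘ψ_g + ψ_g∘d)(e'_i) = ((g⊗1 − 1⊗g)∘Δ_Q)(e'_i) = y·e'_{i−2} − e'_{i−2}·y`,
i.e. both sides equal `y⊗1 − 1⊗y ∈ Q_{i−2} = B⊗B` for `i ≥ 2` and vanish for `i < 2`.
Hence `ψ_g` satisfies the homotopy lifting equation
`d∘ψ_g + ψ_g∘d = (g⊗1 − 1⊗g)Δ_Q` for the degree-2 cocycle `g`.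
-/

theorem concrete_psi_g_homotopy_lifting (k : Type u) [Field k] [CharZero k]
    -- `Δ_Q` is the diagonal map with `Δ(e'_i) = Σ_{j+l=i} e'_j ⊗ e'_l`
    (Δ : ∀ i, PC k i →ₗ[k] DTarget (actC k) i)
    (hΔ : IsDiagonal (actC k) (dC k) (muC k) Δ)
    (hΔval : ∀ i : ℤ, 0 ≤ i → Δ i (eB k i) =
      ∑ j ∈ Finset.range (i.toNat + 1),
        inclDT (actC k) (⟨((j : ℤ), i - (j : ℤ)), by omega⟩ : DiagIdx i)
          (tmulA (actC k) (eB k (j : ℤ)) (eB k (i - (j : ℤ)))))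
    -- the cocycle `g` with `g(e'_2) = y`
    (g : PC k 2 →ₗ[k] TP k) (hgbim : IsBimapToAlg (actC k) g)
    (hgc : IsCocycle (dC k) g) (hgval : g (eB k 2) = yGen k)
    -- the family `ψ_g` with `ψ_g(e'_{2j}) = e'_{2j−1}`, `ψ_g(e'_{2j−1}) = 0`
    (ψ : ∀ i, PC k i →ₗ[k] PC k (i - 2 + 1)) (hψbim : ∀ i, IsBimap (actC k) (ψ i))
    (hψeven : ∀ i : ℤ, 0 ≤ i → Even i →
      ψ i (eB k i) = pcast (k := k) (P := PC k) (show i - 1 = i - 2 + 1 by omega) (eB k (i - 1)))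
    (hψodd : ∀ i : ℤ, 0 ≤ i → Odd i → ψ i (eB k i) = 0) :
    -- for `i ≥ 2`, both sides evaluate on `e'_i` to `y·e'_{i−2} − e'_{i−2}·y`
    (∀ i : ℤ, 2 ≤ i →
      (pcast (show i - 2 + 1 - 1 = i - 2 by omega) ∘ₗ dC k (i - 2 + 1) ∘ₗ ψ i
        + pcast (show i - 1 - 2 + 1 = i - 2 by omega) ∘ₗ ψ (i - 1) ∘ₗ dC k i) (eB k i)
      = (actC k).actL (i - 2) (yGen k) (eB k (i - 2))
        - (actC k).actR (i - 2) (op (yGen k)) (eB k (i - 2)) ∧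
      (fTensorOne (actC k) g i ∘ₗ Δ i - oneTensorF (actC k) g i ∘ₗ Δ i) (eB k i)
      = (actC k).actL (i - 2) (yGen k) (eB k (i - 2))
        - (actC k).actR (i - 2) (op (yGen k)) (eB k (i - 2))) ∧
    -- and both sides vanish on `e'_i` for `i < 2`
    (∀ i : ℤ, i < 2 →
      (pcast (show i - 2 + 1 - 1 = i - 2 by omega) ∘ₗ dC k (i - 2 + 1) ∘ₗ ψ i
        + pcast (show i - 1 - 2 + 1 = i - 2 by omega) ∘ₗ ψ (i - 1) ∘ₗ dC k i) (eB k i)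
        = 0 ∧
      (fTensorOne (actC k) g i ∘ₗ Δ i - oneTensorF (actC k) g i ∘ₗ Δ i) (eB k i) = 0) ∧
    -- hence the homotopy lifting equation holds for the degree-2 cocycle `g`
    (∀ i : ℤ,
      pcast (show i - 2 + 1 - 1 = i - 2 by omega) ∘ₗ dC k (i - 2 + 1) ∘ₗ ψ i
        - (((2 : ℤ) - 1).negOnePow : ℤ) •
            (pcast (show i - 1 - 2 + 1 = i - 2 by omega) ∘ₗ ψ (i - 1) ∘ₗ dC k i)
      = fTensorOne (actC k) g i ∘ₗ Δ i - oneTensorF (actC k) g i ∘ₗ Δ i) := by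

  have hbimLψ : ∀ (j : ℤ) (a : TP k) (z : PC k j),
      ψ j ((actC k).actL j a z) = (actC k).actL (j-2+1) a (ψ j z) :=
    fun j a z => by simpa using LinearMap.congr_fun ((hψbim j).1 a) z
  have hbimRψ : ∀ (j : ℤ) (b : (TP k)ᵐᵒᵖ) (z : PC k j),
      ψ j ((actC k).actR j b z) = (actC k).actR (j-2+1) b (ψ j z) :=
    fun j b z => by simpa using LinearMap.congr_fun ((hψbim j).2 b) z
  have hdLb : ∀ (j : ℤ) (a : TP k) (z : PC k j),
      dC k j ((actC k).actL j a z) = (actC k).actL (j-1) a (dC k j z) :=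
    fun j a z => by simpa using LinearMap.congr_fun ((dC_bimap j).1 a) z
  have hdRb : ∀ (j : ℤ) (b : (TP k)ᵐᵒᵖ) (z : PC k j),
      dC k j ((actC k).actR j b z) = (actC k).actR (j-1) b (dC k j z) :=
    fun j b z => by simpa using LinearMap.congr_fun ((dC_bimap j).2 b) z
  -- value of the homotopy side on `e_i`, `i ≥ 2`
  have hD : ∀ i : ℤ, 2 ≤ i →
      pcast (k := k) (P := PC k) (show i - 2 + 1 - 1 = i - 2 by omega)
          (dC k (i - 2 + 1) (ψ i (eB k i)))
        + pcast (k := k) (P := PC k) (show i - 1 - 2 + 1 = i - 2 by omega)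
          (ψ (i - 1) (dC k i (eB k i)))
      = (actC k).actL (i - 2) (yGen k) (eB k (i - 2))
        - (actC k).actR (i - 2) (op (yGen k)) (eB k (i - 2)) := by
    intro i hi
    have h0 : (0:ℤ) ≤ i - 2 := by omega
    rw [dC_eB i (by omega), map_add, map_zsmul, hbimLψ, hbimRψ]
    apply (toR k (i-2) h0).injective
    rcases Int.even_or_odd i with he | ho
    · have hodd1 : Odd (i - 2 + 1) := by rcases he with ⟨t, rfl⟩; rw [Int.odd_iff]; omega
      have hnodd : ¬ Odd i := by simpa using he
      have hoddm : Odd (i - 1) := by rcases he with ⟨t, rfl⟩; rw [Int.odd_iff]; omega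
      rw [hψeven i (by omega) he, hψodd (i-1) (by omega) hoddm, if_neg hnodd, one_smul]
      simp only [map_zero, add_zero, map_sub]
      rw [toR_pcast', toR_dC' _ (by omega), toR_pcast', toR_eB, if_pos hodd1]
      simp only [toR_actL, toR_actR, toR_eB, uE, yGen, mul_one]
    · have hevm : Even (i - 1) := by rcases ho with ⟨t, rfl⟩; exact ⟨t, by ring⟩
      rw [hψodd i (by omega) ho, hψeven (i-1) (by omega) hevm, if_pos ho]
      simp only [map_zero, zero_add, map_add, map_zsmul, map_sub]
      simp only [toR_pcast', toR_actL, toR_actR, toR_eB, uE, yGen, mul_one]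
      rw [neg_one_zsmul, ← sub_eq_add_neg]
  -- value of the homotopy side on `e_i`, `i < 2`
  have hD0 : ∀ i : ℤ, i < 2 →
      pcast (k := k) (P := PC k) (show i - 2 + 1 - 1 = i - 2 by omega)
          (dC k (i - 2 + 1) (ψ i (eB k i)))
        + pcast (k := k) (P := PC k) (show i - 1 - 2 + 1 = i - 2 by omega)
          (ψ (i - 1) (dC k i (eB k i))) = 0 := by
    intro i hi
    have ht1 : dC k (i-2+1) (ψ i (eB k i)) = 0 := by
      rw [dC_neg (i-2+1) (by omega)]; rfl
    rw [ht1, map_zero, zero_add]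
    rcases lt_or_ge i 1 with h1 | h1
    · rw [dC_neg i (by omega)]
      simp
    · have hi1 : i = 1 := by omega
      subst hi1
      rw [dC_eB 1 le_rfl, if_pos ⟨0, by norm_num⟩, map_add, map_zsmul, hbimLψ, hbimRψ]
      rw [hψeven (1-1) (by omega) ⟨0, by norm_num⟩, eB_neg (1-1-1) (by omega)]
      simp
  -- value of the cocycle side on `e_i`
  have hFT : ∀ i : ℤ, 0 ≤ i →
      fTensorOne (actC k) g i ((Δ i) (eB k i)) - oneTensorF (actC k) g i ((Δ i) (eB k i))
      = if 2 ≤ i then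
          (actC k).actL (i - 2) (yGen k) (eB k (i - 2))
            - (actC k).actR (i - 2) (op (yGen k)) (eB k (i - 2))
        else 0 := by
    intro i h0
    rw [val_fT Δ g hΔval hgbim hgval i h0, val_oT Δ g hΔval hgbim hgval i h0]
    by_cases h2 : 2 ≤ i
    · rw [if_pos h2, if_pos h2, if_pos h2]
    · rw [if_neg h2, if_neg h2, if_neg h2, sub_zero]
  refine ⟨fun i hi => ⟨?_, ?_⟩, fun i hi => ⟨?_, ?_⟩, fun i => ?_⟩
  · simpa only [LinearMap.add_apply, LinearMap.coe_comp, Function.comp_apply] using hD i hi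
  · simp only [LinearMap.sub_apply, LinearMap.coe_comp, Function.comp_apply]
    rw [hFT i (by omega), if_pos hi]
  · simpa only [LinearMap.add_apply, LinearMap.coe_comp, Function.comp_apply] using hD0 i hi
  · rcases lt_or_ge i 0 with hneg | h0
    · simp only [LinearMap.sub_apply, LinearMap.coe_comp, Function.comp_apply]
      rw [eB_neg i hneg]
      simp
    · simp only [LinearMap.sub_apply, LinearMap.coe_comp, Function.comp_apply]
      rw [hFT i h0, if_neg (by omega)]
  · rcases lt_or_ge i 0 with hneg | h0
    · have := PC_subsingleton (k := k) i hneg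
      ext z
      rw [Subsingleton.elim z (0 : PC k i)]
      simp
    · have hsgn : ((((2 : ℤ) - 1).negOnePow : ℤ)) = -1 := by
        norm_num [Int.negOnePow_one]
      rw [hsgn, neg_smul, one_smul, sub_neg_eq_add]
      have hΔL : ∀ (a : TP k) (z : PC k i),
          Δ i ((actC k).actL i a z) = actLDT (actC k) i a (Δ i z) :=
        fun a z => by simpa using LinearMap.congr_fun (hΔ.bimapL i a) z
      have hΔR : ∀ (b : (TP k)ᵐᵒᵖ) (z : PC k i),
          Δ i ((actC k).actR i b z) = actRDT (actC k) i b (Δ i z) :=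
        fun b z => by simpa using LinearMap.congr_fun (hΔ.bimapR i b) z
      have hfTL : ∀ (a : TP k) (w : DTarget (actC k) i),
          fTensorOne (actC k) g i (actLDT (actC k) i a w)
            = (actC k).actL (i - 2) a (fTensorOne (actC k) g i w) :=
        fun a w => by
          simpa using LinearMap.congr_fun (fTensorOne_actLDT (actC k) actC_comm g hgbim i a) w
      have hfTR : ∀ (b : (TP k)ᵐᵒᵖ) (w : DTarget (actC k) i),
          fTensorOne (actC k) g i (actRDT (actC k) i b w)
            = (actC k).actR (i - 2) b (fTensorOne (actC k) g i w) :=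
        fun b w => by
          simpa using LinearMap.congr_fun (fTensorOne_actRDT (actC k) actC_comm g hgbim i b) w
      have hoTL : ∀ (a : TP k) (w : DTarget (actC k) i),
          oneTensorF (actC k) g i (actLDT (actC k) i a w)
            = (actC k).actL (i - 2) a (oneTensorF (actC k) g i w) :=
        fun a w => by
          simpa using LinearMap.congr_fun (oneTensorF_actLDT (actC k) actC_comm g hgbim i a) w
      have hoTR : ∀ (b : (TP k)ᵐᵒᵖ) (w : DTarget (actC k) i),
          oneTensorF (actC k) g i (actRDT (actC k) i b w)
            = (actC k).actR (i - 2) b (oneTensorF (actC k) g i w) :=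
        fun b w => by
          simpa using LinearMap.congr_fun (oneTensorF_actRDT (actC k) actC_comm g hgbim i b) w
      apply PC_ext h0
      intro a b
      simp only [LinearMap.add_apply, LinearMap.sub_apply, LinearMap.coe_comp,
        Function.comp_apply]
      simp only [hbimLψ, hbimRψ, hdLb, hdRb, hΔL, hΔR, hfTL, hfTR, hoTL, hoTR,
        pcast_actL, pcast_actR]
      rw [← map_add ((actC k).actL (i-2) a), ← map_add ((actC k).actR (i-2) (op b)),
        ← map_sub ((actC k).actL (i-2) a), ← map_sub ((actC k).actR (i-2) (op b))]
      refine congrArg _ (congrArg _ ?_)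
      by_cases h2 : 2 ≤ i
      · rw [hD i h2, hFT i h0, if_pos h2]
      · rw [hD0 i (by omega), hFT i h0, if_neg h2]

end HLPaper

end
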